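/- arXiv:2402.12468 — 7 statements merged into one kernel-verified Lean document; each statement's English description precedes it below -/
import Mathlib

section
/- Let N ≥ 1 and let L be a real (N+1)×(N+1) matrix (indexed by 0,1,…,N) all of whose row sums are zero. Define the N×N matrix L̂ by L̂_{ij} = L_{ij} − L_{0j} for i,j ∈ {1,…,N}. Then the characteristic polynomial of L factors as charpoly(L) = X · charpoly(L̂); in particular the eigenvalues of L̂ (with multiplicity) are exactly the eigenvalues of L with one zero eigenvalue removed. -/
/-!
Zero row sums say that the first column of `L` is minus the sum of the others. Conjugating by
the unipotent block matrix `[[1, 0], [u, 1]]`, with `u` the all-ones column, clears that column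
below the corner and leaves a block upper triangular matrix with diagonal blocks `0` (of size 1)
and `L̂`.
-/

open Matrix Polynomial

namespace Matrix

variable {R m n : Type*} [CommRing R] [Fintype m] [Fintype n] [DecidableEq m] [DecidableEq n]

theorem charpoly_fromBlocks_neg_mul (B : Matrix m n R) (D : Matrix n n R) (u : Matrix n m R) :
    (fromBlocks (-(B * u)) B (-(D * u)) D).charpoly =
      X ^ Fintype.card m * (D - u * B).charpoly := by
  have hconj : fromBlocks (-(B * u)) B (-(D * u)) D =
      fromBlocks 1 0 u 1 * fromBlocks 0 B 0 (D - u * B) * fromBlocks 1 0 (-u) 1 := by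
    simp only [fromBlocks_multiply]
    congr 1 <;> simp [Matrix.mul_sub, Matrix.mul_neg]
  have hinv : fromBlocks 1 0 (-u) 1 * fromBlocks 1 0 u 1 = (1 : Matrix (m ⊕ n) (m ⊕ n) R) := by
    simp [fromBlocks_multiply, fromBlocks_one]
  rw [hconj, charpoly_mul_comm, ← Matrix.mul_assoc, hinv, Matrix.one_mul,
    charpoly_fromBlocks_zero₂₁, charpoly_zero]

theorem charpoly_eq_X_mul_charpoly_sub_row_zero {N : ℕ} (L : Matrix (Fin (N + 1)) (Fin (N + 1)) R)
    (hrow : ∀ i, ∑ j, L i j = 0) :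
    L.charpoly = X * (of fun i j : Fin N => L i.succ j.succ - L 0 j.succ).charpoly := by
  let e : Fin (N + 1) ≃ Unit ⊕ Fin N :=
    (finSuccEquiv N).trans ((Equiv.optionEquivSumPUnit _).trans (Equiv.sumComm _ _))
  let B : Matrix Unit (Fin N) R := of fun _ j => L 0 j.succ
  let D : Matrix (Fin N) (Fin N) R := of fun i j => L i.succ j.succ
  let u : Matrix (Fin N) Unit R := of fun _ _ => 1
  have hcol0 : ∀ i, L i 0 = -∑ j : Fin N, L i j.succ := fun i => by
    rw [eq_neg_iff_add_eq_zero, ← Fin.sum_univ_succ, hrow]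
  have hblocks : reindex e e L = fromBlocks (-(B * u)) B (-(D * u)) D := by
    ext (_ | i) (_ | j) <;> simp [e, B, D, u, hcol0, mul_apply]
  have hLhat : (of fun i j : Fin N => L i.succ j.succ - L 0 j.succ) = D - u * B := by
    ext i j
    simp [B, D, u, mul_apply]
  rw [← charpoly_reindex e, hblocks, charpoly_fromBlocks_neg_mul, hLhat, Fintype.card_unit,
    pow_one]

end Matrix

theorem charpoly_factor_of_zero_row_sums_general (N : ℕ)
    (L : Matrix (Fin (N + 1)) (Fin (N + 1)) ℝ)
    (hrow : ∀ i : Fin (N + 1), ∑ j, L i j = 0)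
    (Lhat : Matrix (Fin N) (Fin N) ℝ)
    (hLhat : ∀ i j : Fin N, Lhat i j = L i.succ j.succ - L 0 j.succ) :
    L.charpoly = Polynomial.X * Lhat.charpoly := by
  obtain rfl : Lhat = of fun i j => L i.succ j.succ - L 0 j.succ := ext hLhat
  exact L.charpoly_eq_X_mul_charpoly_sub_row_zero hrow

/-- If `L` is a real `(N+1) × (N+1)` matrix with zero row sums, and
`L̂` is the `N × N` matrix with entries `L̂ i j = L (i+1) (j+1) - L 0 (j+1)`, then the
characteristic polynomial of `L` factors as `X` times the characteristic polynomial
of `L̂`. -/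
theorem charpoly_factor_of_zero_row_sums (N : ℕ) (hN : 1 ≤ N)
    (L : Matrix (Fin (N + 1)) (Fin (N + 1)) ℝ)
    (hrow : ∀ i : Fin (N + 1), ∑ j, L i j = 0)
    (Lhat : Matrix (Fin N) (Fin N) ℝ)
    (hLhat : ∀ i j : Fin N, Lhat i j = L i.succ j.succ - L 0 j.succ) :
    L.charpoly = Polynomial.X * Lhat.charpoly :=
  charpoly_factor_of_zero_row_sums_general N L hrow Lhat hLhat
end

section
/- Let L̃ ∈ ℝ^{N×N} be symmetric and let M = I_N ⊗ A − L̃ ⊗ (B K). Then for every complex number μ, μ belongs to the spectrum of M (viewed as a complex matrix) if and only if there exists a real eigenvalue λ of L̃ such that μ belongs to the spectrum of A − λ·(B K) (viewed as a complex matrix). Consequently, all eigenvalues of M have negative real part if and only if for every eigenvalue λ of L̃ all eigenvalues of A − λ·(B K) have negative real part. -/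
/-!
Diagonalise `L̃ = U D Uᵀ` with `U` orthogonal. Conjugating by `U ⊗ I` turns `M` into
`I ⊗ A - D ⊗ BK`, which after swapping the Kronecker factors is block diagonal with blocks
`A - dᵢ BK`; the spectrum of a block-diagonal matrix is the union of the spectra of its blocks,
since its characteristic determinant is the product of theirs.
-/

open Matrix
open scoped Kronecker

namespace Matrix

variable {ι n : Type*} [DecidableEq ι]

theorem one_kronecker_sub_diagonal_kronecker {R : Type*} [CommRing R] (A W : Matrix n n R)
    (d : ι → R) :
    (1 : Matrix ι ι R) ⊗ₖ A - diagonal d ⊗ₖ W =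
      reindex (Equiv.prodComm _ _) (Equiv.prodComm _ _) (blockDiagonal fun i => A - d i • W) := by
  rw [← diagonal_one, diagonal_kronecker, diagonal_kronecker]
  ext
  simp [blockDiagonal_apply, ite_sub_ite]

variable [Fintype ι] [Fintype n] [DecidableEq n]

theorem spectrum_blockDiagonal {K : Type*} [Field K] (X : ι → Matrix n n K) :
    spectrum K (blockDiagonal X) = ⋃ i, spectrum K (X i) := by
  have hsub (μ : K) : algebraMap K _ μ - blockDiagonal X =
      blockDiagonal fun i => algebraMap K (Matrix n n K) μ - X i := by
    rw [Algebra.algebraMap_eq_smul_one, Algebra.algebraMap_eq_smul_one, ← blockDiagonal_one,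
      ← blockDiagonal_smul, ← blockDiagonal_sub]
    rfl
  ext μ
  simp only [Set.mem_iUnion, spectrum.mem_iff, hsub, isUnit_iff_isUnit_det, det_blockDiagonal,
    isUnit_iff_ne_zero, ne_eq, Finset.prod_eq_zero_iff, Finset.mem_univ, true_and, not_not]

theorem kronecker_one_mul_kronecker_one_of_mul_eq_one {R : Type*} [CommRing R]
    {U V : Matrix ι ι R} (hUV : U * V = 1) :
    (U ⊗ₖ (1 : Matrix n n R)) * (V ⊗ₖ 1) = 1 := by
  rw [← mul_kronecker_mul, hUV, one_mul, one_kronecker_one]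

theorem kronecker_one_conj_one_kronecker_sub_kronecker {R : Type*} [CommRing R]
    {U V : Matrix ι ι R} (hUV : U * V = 1) (A W : Matrix n n R) (D : Matrix ι ι R) :
    (U ⊗ₖ 1) * ((1 : Matrix ι ι R) ⊗ₖ A - D ⊗ₖ W) * (V ⊗ₖ 1) = 1 ⊗ₖ A - (U * D * V) ⊗ₖ W := by
  rw [mul_sub, sub_mul, ← mul_kronecker_mul, ← mul_kronecker_mul, ← mul_kronecker_mul,
    ← mul_kronecker_mul]
  simp only [mul_one, one_mul, hUV]

theorem spectrum_map_mul_mul_of_mul_eq_one {R S : Type*} [CommRing R] [CommRing S] (f : R →+* S)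
    {P Q : Matrix n n R} (hPQ : P * Q = 1) (X : Matrix n n R) :
    spectrum S ((P * X * Q).map f) = spectrum S (X.map f) := by
  let u : (Matrix n n R)ˣ := ⟨P, Q, hPQ, mul_eq_one_comm.mp hPQ⟩
  let v := Units.map (f.mapMatrix : Matrix n n R →+* Matrix n n S).toMonoidHom u
  have hconj : (P * X * Q).map f = v * X.map f * (↑v⁻¹ : Matrix n n S) := by
    simp [v, u]
  rw [hconj, spectrum.units_conjugate]

theorem spectrum_map_one_kronecker_sub_diagonal_kronecker {R K : Type*} [CommRing R] [Field K]
    (f : R →+* K) (A W : Matrix n n R) (d : ι → R) :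
    spectrum K (((1 : Matrix ι ι R) ⊗ₖ A - diagonal d ⊗ₖ W).map f) =
      ⋃ i, spectrum K ((A - d i • W).map f) := by
  rw [one_kronecker_sub_diagonal_kronecker, reindex_apply, ← submatrix_map,
    blockDiagonal_map _ _ (map_zero f), ← reindex_apply, ← coe_reindexAlgEquiv K K,
    AlgEquiv.spectrum_eq, spectrum_blockDiagonal]

theorem IsSymm.exists_orthogonal_diagonalization {S : Matrix n n ℝ} (hS : S.IsSymm) :
    ∃ (U : Matrix n n ℝ) (d : n → ℝ),
      U * Uᵀ = 1 ∧ S = U * diagonal d * Uᵀ ∧ spectrum ℝ S = Set.range d := by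
  have hH : S.IsHermitian := by rwa [IsHermitian, conjTranspose_eq_transpose_of_trivial]
  refine ⟨hH.eigenvectorUnitary, hH.eigenvalues, ?_, ?_, hH.spectrum_real_eq_range_eigenvalues⟩
  · simpa [star_eq_conjTranspose] using Unitary.mul_star_self_of_mem hH.eigenvectorUnitary.2
  · simpa [star_eq_conjTranspose] using hH.spectral_theorem

end Matrix

/-- For `L̃` symmetric and `M = I_N ⊗ A - L̃ ⊗ (B K)`, a complex
number `μ` is in the spectrum of `M` (over `ℂ`) iff it is in the spectrum of
`A - λ (B K)` (over `ℂ`) for some real eigenvalue `λ` of `L̃`; consequently `M` is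
Hurwitz iff each `A - λ (B K)` is Hurwitz. -/
theorem spectrum_kronecker_consensus (n m N : ℕ)
    (A : Matrix (Fin n) (Fin n) ℝ) (B : Matrix (Fin n) (Fin m) ℝ)
    (K : Matrix (Fin m) (Fin n) ℝ) (Ltil : Matrix (Fin N) (Fin N) ℝ)
    (hL : Ltil.IsSymm)
    (M : Matrix (Fin N × Fin n) (Fin N × Fin n) ℝ)
    (hM : M = (1 : Matrix (Fin N) (Fin N) ℝ) ⊗ₖ A - Ltil ⊗ₖ (B * K)) :
    (∀ μ : ℂ, μ ∈ spectrum ℂ (M.map (algebraMap ℝ ℂ)) ↔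
        ∃ lam : ℝ, lam ∈ spectrum ℝ Ltil ∧
          μ ∈ spectrum ℂ ((A - lam • (B * K)).map (algebraMap ℝ ℂ))) ∧
    ((∀ μ ∈ spectrum ℂ (M.map (algebraMap ℝ ℂ)), μ.re < 0) ↔
      ∀ lam ∈ spectrum ℝ Ltil,
        ∀ μ ∈ spectrum ℂ ((A - lam • (B * K)).map (algebraMap ℝ ℂ)), μ.re < 0) := by
  obtain ⟨U, d, hU, hLtil, hLspec⟩ := hL.exists_orthogonal_diagonalization
  have hMspec : spectrum ℂ (M.map (algebraMap ℝ ℂ)) =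
      ⋃ i, spectrum ℂ ((A - d i • (B * K)).map (algebraMap ℝ ℂ)) := by
    rw [hM, hLtil, ← kronecker_one_conj_one_kronecker_sub_kronecker hU,
      spectrum_map_mul_mul_of_mul_eq_one _ (kronecker_one_mul_kronecker_one_of_mul_eq_one hU),
      spectrum_map_one_kronecker_sub_diagonal_kronecker]
  refine ⟨fun μ => ?_, ?_⟩
  · simp only [hMspec, hLspec, Set.mem_iUnion, Set.exists_range_iff]
  · simp only [hMspec, hLspec, Set.mem_iUnion, Set.forall_mem_range, forall_exists_index]
    exact forall_comm
end

section
/- Let A ∈ ℝ^{n×n}, B ∈ ℝ^{n×m}, let X ∈ ℝ^{n×n} be symmetric positive definite and γ > 0 satisfy that A X + X A^⊤ − γ B B^⊤ is negative definite. Fix λ₁ > 0 and set K = (γ/(2λ₁)) B^⊤ X^{−1}. Then for every real λ ≥ λ₁, the matrix (A − λ B K) X + X (A − λ B K)^⊤ is negative definite. -/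
open Matrix

/-!
With `K = c Bᵀ X⁻¹` and `X` symmetric, the feedback terms become `B K X = (B K X)ᵀ = c B Bᵀ`, so
`(A - λ B K) X + X (A - λ B K)ᵀ = (A X + X Aᵀ - γ B Bᵀ) - (2 λ c - γ) B Bᵀ`.
For `c = γ / (2 λ₁)` and `λ ≥ λ₁` the coefficient `2 λ c - γ` is nonnegative, and subtracting a
nonnegative multiple of the positive semidefinite `B Bᵀ` keeps the quadratic form negative.
-/

section Algebra

variable {ι κ R : Type*} [Fintype ι] [Fintype κ] [CommRing R]

theorem sub_smul_mul_add_mul_transpose_sub_smul {X : Matrix ι ι R} (hX : Xᵀ = X)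
    (A F : Matrix ι ι R) (t : R) :
    (A - t • F) * X + X * (A - t • F)ᵀ = A * X + X * Aᵀ - t • (F * X + (F * X)ᵀ) := by
  rw [sub_mul, transpose_sub, mul_sub, transpose_smul, Matrix.smul_mul, Matrix.mul_smul,
    transpose_mul, hX]
  module

theorem mul_smul_transpose_mul_inv_mul [DecidableEq ι] {X : Matrix ι ι R} (hX : IsUnit X.det)
    (B : Matrix ι κ R) (c : R) :
    B * (c • (Bᵀ * X⁻¹)) * X = c • (B * Bᵀ) := by
  rw [Matrix.mul_smul, Matrix.smul_mul, ← Matrix.mul_assoc, nonsing_inv_mul_cancel_right _ _ hX]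

theorem lyapunov_sub_smul_feedback_eq [DecidableEq ι] {X : Matrix ι ι R} (hXT : Xᵀ = X)
    (hX : IsUnit X.det) (A : Matrix ι ι R) (B : Matrix ι κ R) (c t : R) :
    (A - t • (B * (c • (Bᵀ * X⁻¹)))) * X + X * (A - t • (B * (c • (Bᵀ * X⁻¹))))ᵀ =
      A * X + X * Aᵀ - (2 * t * c) • (B * Bᵀ) := by
  rw [sub_smul_mul_add_mul_transpose_sub_smul hXT, mul_smul_transpose_mul_inv_mul hX,
    transpose_smul, transpose_mul, transpose_transpose]
  module

end Algebra

theorem dotProduct_mulVec_sub_smul_neg_of_posSemidef {ι : Type*} [Fintype ι]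
    {M P : Matrix ι ι ℝ} (hP : P.PosSemidef) {t : ℝ} (ht : 0 ≤ t) {x : ι → ℝ}
    (hx : x ⬝ᵥ (M *ᵥ x) < 0) : x ⬝ᵥ ((M - t • P) *ᵥ x) < 0 := by
  have hPx : 0 ≤ x ⬝ᵥ (P *ᵥ x) := by simpa using hP.dotProduct_mulVec_nonneg x
  rw [sub_mulVec, dotProduct_sub, smul_mulVec, dotProduct_smul, smul_eq_mul]
  nlinarith

theorem le_two_mul_mul_div_two_mul {γ lam₁ lam : ℝ} (hγ : 0 ≤ γ) (hlam₁ : 0 < lam₁)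
    (hlam : lam₁ ≤ lam) : γ ≤ 2 * lam * (γ / (2 * lam₁)) := by
  rw [← mul_div_assoc, le_div_iff₀ (by positivity)]
  nlinarith

/-- If `X ≻ 0` and `γ > 0` satisfy `A X + X Aᵀ - γ B Bᵀ ≺ 0`, then
with `K = (γ / (2 λ₁)) Bᵀ X⁻¹` for a fixed `λ₁ > 0`, every `λ ≥ λ₁` makes
`(A - λ B K) X + X (A - λ B K)ᵀ` negative definite. -/
theorem gain_stabilizes_all_eigenvalues (n m : ℕ)
    (A : Matrix (Fin n) (Fin n) ℝ) (B : Matrix (Fin n) (Fin m) ℝ)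
    (X : Matrix (Fin n) (Fin n) ℝ) (hX : X.PosDef) (γ : ℝ) (hγ : 0 < γ)
    (hineq : ∀ x : Fin n → ℝ, x ≠ 0 → x ⬝ᵥ ((A * X + X * Aᵀ - γ • (B * Bᵀ)) *ᵥ x) < 0)
    (lam₁ : ℝ) (hlam₁ : 0 < lam₁)
    (K : Matrix (Fin m) (Fin n) ℝ) (hK : K = (γ / (2 * lam₁)) • (Bᵀ * X⁻¹)) :
    ∀ lam : ℝ, lam₁ ≤ lam →
      ∀ x : Fin n → ℝ, x ≠ 0 →
        x ⬝ᵥ (((A - lam • (B * K)) * X + X * (A - lam • (B * K))ᵀ) *ᵥ x) < 0 := by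
  intro lam hlam x hx
  have hXT : Xᵀ = X := (isHermitian_iff_isSymm.mp hX.isHermitian).eq
  have hBB : (B * Bᵀ).PosSemidef := by
    simpa [conjTranspose_eq_transpose_of_trivial] using posSemidef_self_mul_conjTranspose B
  have hM : (A - lam • (B * K)) * X + X * (A - lam • (B * K))ᵀ =
      (A * X + X * Aᵀ - γ • (B * Bᵀ)) - (2 * lam * (γ / (2 * lam₁)) - γ) • (B * Bᵀ) := by
    rw [hK, lyapunov_sub_smul_feedback_eq hXT ((isUnit_iff_isUnit_det X).mp hX.isUnit), sub_smul]
    abel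
  rw [hM]
  exact dotProduct_mulVec_sub_smul_neg_of_posSemidef hBB
    (sub_nonneg.mpr (le_two_mul_mul_div_two_mul hγ.le hlam₁ hlam)) (hineq x hx)
end

section
/- Suppose there exists β > 0 such that the block matrix [[P M + M^⊤ P + β P, P F],[F^⊤ P, −β Q]] is negative semidefinite. Then the ellipsoid ε(P) is invariant for the perturbed error system: for every disturbance ω and every solution e of the perturbed error system with e(0)^⊤ P e(0) ≤ 1, one has e(t)^⊤ P e(t) ≤ 1 for all t ≥ 0. -/
open Matrix
open scoped Kronecker

/-!
Along a solution, `V = eᵀ P e` has derivative `V' = (M e + F ω)ᵀ P e + eᵀ P (M e + F ω)`, and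
testing the LMI on the stacked vector `(e, ω)` gives `V' + β V ≤ β ωᵀ Q ω ≤ β`.
Hence `(V - 1) e^{β t}` is nonincreasing, so `V(0) ≤ 1` forces `V(t) ≤ 1` for all `t ≥ 0`.
-/

section Calculus

variable {ι κ : Type*} [Fintype ι] {u v : ℝ → ι → ℝ} {u' v' : ι → ℝ} {t : ℝ}

theorem HasDerivAt.dotProduct (hu : HasDerivAt u u' t) (hv : HasDerivAt v v' t) :
    HasDerivAt (fun s ↦ u s ⬝ᵥ v s) (u' ⬝ᵥ v t + u t ⬝ᵥ v') t := by
  have hui := hasDerivAt_pi.1 hu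
  have hvi := hasDerivAt_pi.1 hv
  have h := HasDerivAt.fun_sum (u := Finset.univ) fun i _ ↦ (hui i).fun_mul (hvi i)
  rwa [Finset.sum_add_distrib] at h

theorem HasDerivAt.mulVec [Fintype κ] (A : Matrix κ ι ℝ) (hu : HasDerivAt u u' t) :
    HasDerivAt (fun s ↦ A *ᵥ u s) (A *ᵥ u') t :=
  (Matrix.mulVecLin A).toContinuousLinearMap.hasFDerivAt.comp_hasDerivAt t hu

end Calculus

theorem le_of_hasDerivAt_le_mul_sub {V V' : ℝ → ℝ} {β c : ℝ}
    (hV : ∀ s, 0 ≤ s → HasDerivAt V (V' s) s) (hV' : ∀ s, 0 ≤ s → V' s ≤ β * (c - V s))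
    (h₀ : V 0 ≤ c) {t : ℝ} (ht : 0 ≤ t) : V t ≤ c := by
  set W : ℝ → ℝ := fun s ↦ (V s - c) * Real.exp (β * s)
  have hW : ∀ s, 0 ≤ s → HasDerivAt W ((V' s - β * (c - V s)) * Real.exp (β * s)) s := by
    intro s hs
    have hexp : HasDerivAt (fun s ↦ Real.exp (β * s)) (Real.exp (β * s) * β) s := by
      simpa using ((hasDerivAt_id s).const_mul β).exp
    refine (((hV s hs).sub_const c).fun_mul hexp).congr_deriv ?_
    ring
  have hW_anti : AntitoneOn W (Set.Ici 0) := by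
    refine antitoneOn_of_hasDerivWithinAt_nonpos (convex_Ici 0)
      (fun s hs ↦ (hW s hs).continuousAt.continuousWithinAt)
      (fun s hs ↦ (hW s (interior_subset hs)).hasDerivWithinAt) fun s hs ↦ ?_
    have := hV' s (interior_subset hs)
    exact mul_nonpos_of_nonpos_of_nonneg (by linarith) (Real.exp_pos _).le
  have hWt : W t ≤ 0 := by
    have := hW_anti Set.self_mem_Ici (Set.mem_Ici.2 ht) ht
    simp only [W, mul_zero, Real.exp_zero, mul_one] at this
    linarith
  have := Real.exp_pos (β * t)
  nlinarith

theorem sumElim_dotProduct_fromBlocks_mulVec_sumElim {ι κ : Type*} [Fintype ι] [Fintype κ]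
    (P M : Matrix ι ι ℝ) (F : Matrix ι κ ℝ) (Q : Matrix κ κ ℝ) (β : ℝ) (x : ι → ℝ) (w : κ → ℝ) :
    Sum.elim x w ⬝ᵥ (fromBlocks (P * M + Mᵀ * P + β • P) (P * F) (Fᵀ * P) (-β • Q) *ᵥ Sum.elim x w)
      = (M *ᵥ x + F *ᵥ w) ⬝ᵥ (P *ᵥ x) + x ⬝ᵥ (P *ᵥ (M *ᵥ x + F *ᵥ w))
        + β * (x ⬝ᵥ (P *ᵥ x)) - β * (w ⬝ᵥ (Q *ᵥ w)) := by
  rw [fromBlocks_mulVec, sumElim_dotProduct_sumElim]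
  simp only [add_mulVec, mulVec_add, add_dotProduct, dotProduct_add, smul_mulVec, dotProduct_smul,
    ← mulVec_mulVec, neg_smul, neg_mulVec, dotProduct_neg, smul_eq_mul, dotProduct_mulVec _ Mᵀ,
    dotProduct_mulVec _ Fᵀ, vecMul_transpose, Sum.elim_comp_inl, Sum.elim_comp_inr]
  ring

theorem lmi_implies_invariant_ellipsoid_general (n N p : ℕ)
    (Q : Matrix (Fin p) (Fin p) ℝ)
    (P : Matrix (Fin N × Fin n) (Fin N × Fin n) ℝ)
    (M : Matrix (Fin N × Fin n) (Fin N × Fin n) ℝ)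
    (F : Matrix (Fin N × Fin n) (Fin p) ℝ)
    (β : ℝ) (hβ : 0 < β)
    (hLMI : ∀ v : (Fin N × Fin n) ⊕ Fin p → ℝ,
      v ⬝ᵥ ((Matrix.fromBlocks (P * M + Mᵀ * P + β • P) (P * F) (Fᵀ * P) (-β • Q)) *ᵥ v) ≤ 0) :
    ∀ ω : ℝ → (Fin p → ℝ), (∀ t : ℝ, 0 ≤ t → ω t ⬝ᵥ (Q *ᵥ ω t) ≤ 1) →
      ∀ e : ℝ → (Fin N × Fin n → ℝ),
        (∀ t : ℝ, 0 ≤ t → HasDerivAt e (M *ᵥ e t + F *ᵥ ω t) t) →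
        e 0 ⬝ᵥ (P *ᵥ e 0) ≤ 1 →
        ∀ t : ℝ, 0 ≤ t → e t ⬝ᵥ (P *ᵥ e t) ≤ 1 := by
  intro ω hω e he he₀ t ht
  refine le_of_hasDerivAt_le_mul_sub (β := β)
    (fun s hs ↦ (he s hs).dotProduct ((he s hs).mulVec P)) (fun s hs ↦ ?_) he₀ ht
  have hLMI_s := hLMI (Sum.elim (e s) (ω s))
  rw [sumElim_dotProduct_fromBlocks_mulVec_sumElim] at hLMI_s
  have := mul_le_mul_of_nonneg_left (hω s hs) hβ.le
  linarith

/-- If there is `β > 0` such that the block matrix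
`[[P M + Mᵀ P + β P, P F], [Fᵀ P, -β Q]]` is negative semidefinite, then the
ellipsoid `ε(P) = {x : xᵀ P x ≤ 1}` is invariant for the perturbed error system
`e' = M e + F ω` with disturbances satisfying `ωᵀ Q ω ≤ 1`.
Here `M = I_N ⊗ A - L̃ ⊗ (B K)` and `F = 1_N ⊗ E`. -/
theorem lmi_implies_invariant_ellipsoid (n m N p : ℕ)
    (A : Matrix (Fin n) (Fin n) ℝ) (B : Matrix (Fin n) (Fin m) ℝ)
    (K : Matrix (Fin m) (Fin n) ℝ) (Ltil : Matrix (Fin N) (Fin N) ℝ)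
    (E : Matrix (Fin n) (Fin p) ℝ)
    (Q : Matrix (Fin p) (Fin p) ℝ) (hQ : Q.PosDef)
    (P : Matrix (Fin N × Fin n) (Fin N × Fin n) ℝ) (hP : P.PosDef)
    (M : Matrix (Fin N × Fin n) (Fin N × Fin n) ℝ)
    (hM : M = (1 : Matrix (Fin N) (Fin N) ℝ) ⊗ₖ A - Ltil ⊗ₖ (B * K))
    (F : Matrix (Fin N × Fin n) (Fin p) ℝ)
    (hF : ∀ (ij : Fin N × Fin n) (k : Fin p), F ij k = E ij.2 k)
    (β : ℝ) (hβ : 0 < β)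
    (hLMI : ∀ v : (Fin N × Fin n) ⊕ Fin p → ℝ,
      v ⬝ᵥ ((Matrix.fromBlocks (P * M + Mᵀ * P + β • P) (P * F) (Fᵀ * P) (-β • Q)) *ᵥ v) ≤ 0) :
    ∀ ω : ℝ → (Fin p → ℝ), (∀ t : ℝ, 0 ≤ t → ω t ⬝ᵥ (Q *ᵥ ω t) ≤ 1) →
      ∀ e : ℝ → (Fin N × Fin n → ℝ),
        (∀ t : ℝ, 0 ≤ t → HasDerivAt e (M *ᵥ e t + F *ᵥ ω t) t) →
        e 0 ⬝ᵥ (P *ᵥ e 0) ≤ 1 →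
        ∀ t : ℝ, 0 ≤ t → e t ⬝ᵥ (P *ᵥ e t) ≤ 1 :=
  lmi_implies_invariant_ellipsoid_general n N p Q P M F β hβ hLMI
end

section
/- Suppose β > 0 is such that the block matrix [[P M + M^⊤ P + β P, P F],[F^⊤ P, −β Q]] is negative semidefinite. Then for every disturbance ω and every solution e of the perturbed error system, the function V(t) = e(t)^⊤ P e(t) satisfies V(t) ≤ 1 + (V(0) − 1)·exp(−β t) for all t ≥ 0. In particular, for every ε > 0 there exists T ≥ 0 such that e(t)^⊤ P e(t) ≤ 1 + ε for all t ≥ T, so the ellipsoid ε(P) is attractive. -/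
/-! Along a solution, `V = eᵀ P e` has derivative `(M e + F ω)ᵀ P e + eᵀ P (M e + F ω)`.
Evaluating the LMI at the vector `(e, ω)` bounds this by `β ωᵀ Q ω - β V ≤ β (1 - V)`
(an S-procedure step), so `(V - 1) exp (β t)` is nonincreasing. -/

open Matrix Filter Topology
open scoped Kronecker

section Calculus

variable {ι : Type*} [Fintype ι] {f g : ℝ → ι → ℝ} {f' g' : ι → ℝ} {t : ℝ}

theorem HasDerivAt.dotProduct_s10 (hf : HasDerivAt f f' t) (hg : HasDerivAt g g' t) :
    HasDerivAt (fun s => f s ⬝ᵥ g s) (f' ⬝ᵥ g t + f t ⬝ᵥ g') t :=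
  (HasDerivAt.fun_sum fun i _ =>
    ((hasDerivAt_pi.mp hf) i).mul ((hasDerivAt_pi.mp hg) i)).congr_deriv Finset.sum_add_distrib

theorem HasDerivAt.const_mulVec {κ : Type*} (P : Matrix κ ι ℝ) (hf : HasDerivAt f f' t) :
    HasDerivAt (fun s => P *ᵥ f s) (P *ᵥ f') t :=
  hasDerivAt_pi.mpr fun i =>
    HasDerivAt.fun_sum fun j _ => ((hasDerivAt_pi.mp hf) j).const_mul (P i j)

end Calculus

theorem le_add_mul_exp_of_hasDerivAt_le {f f' : ℝ → ℝ} {c β : ℝ}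
    (hf : ∀ t, 0 ≤ t → HasDerivAt f (f' t) t) (hf' : ∀ t, 0 ≤ t → f' t ≤ -β * (f t - c))
    {t : ℝ} (ht : 0 ≤ t) : f t ≤ c + (f 0 - c) * Real.exp (-β * t) := by
  set g : ℝ → ℝ := fun s => (f s - c) * Real.exp (β * s)
  have hg : ∀ s, 0 ≤ s → HasDerivAt g ((f' s + β * (f s - c)) * Real.exp (β * s)) s :=
    fun s hs => (((hf s hs).sub_const c).fun_mul ((hasDerivAt_id' s).const_mul β).exp).congr_deriv
      (by ring)
  have hg_anti : AntitoneOn g (Set.Ici 0) := by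
    refine antitoneOn_of_hasDerivWithinAt_nonpos (convex_Ici 0)
      (fun s hs => (hg s hs).continuousAt.continuousWithinAt)
      (fun s hs => (hg s (interior_subset hs)).hasDerivWithinAt) fun s hs => ?_
    have hs : 0 ≤ s := interior_subset hs
    exact mul_nonpos_of_nonpos_of_nonneg (by linarith [hf' s hs]) (Real.exp_pos _).le
  have hgt : g t ≤ f 0 - c := by simpa [g] using hg_anti Set.self_mem_Ici ht ht
  have hexp : Real.exp (β * t) * Real.exp (-β * t) = 1 := by
    rw [← Real.exp_add]; simp
  calc f t = c + g t * Real.exp (-β * t) := by simp only [g]; rw [mul_assoc, hexp]; ring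
    _ ≤ c + (f 0 - c) * Real.exp (-β * t) := by gcongr

theorem exists_forall_ge_le_add_of_le_add_mul_exp {f : ℝ → ℝ} {a c β ε : ℝ} (hβ : 0 < β)
    (hf : ∀ t, 0 ≤ t → f t ≤ c + a * Real.exp (-β * t)) (hε : 0 < ε) :
    ∃ T, 0 ≤ T ∧ ∀ t, T ≤ t → f t ≤ c + ε := by
  have hdecay : Tendsto (fun t => a * Real.exp (-β * t)) atTop (𝓝 0) := by
    simpa [neg_mul] using
      (Real.tendsto_exp_neg_atTop_nhds_zero.comp (tendsto_id.const_mul_atTop hβ)).const_mul a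
  obtain ⟨T, hT⟩ := eventually_atTop.mp (hdecay.eventually (ge_mem_nhds hε))
  refine ⟨max T 0, le_max_right _ _, fun t ht => ?_⟩
  linarith [hf t ((le_max_right _ _).trans ht), hT t ((le_max_left _ _).trans ht)]

section LMI

variable {R ι κ : Type*} [CommRing R] [Fintype ι] [Fintype κ]

theorem sumElim_dotProduct_fromBlocks_mulVec_sumElim_s10 (A : Matrix ι ι R) (B : Matrix ι κ R)
    (C : Matrix κ ι R) (D : Matrix κ κ R) (x : ι → R) (w : κ → R) :
    Sum.elim x w ⬝ᵥ (fromBlocks A B C D *ᵥ Sum.elim x w) =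
      x ⬝ᵥ (A *ᵥ x) + x ⬝ᵥ (B *ᵥ w) + w ⬝ᵥ (C *ᵥ x) + w ⬝ᵥ (D *ᵥ w) := by
  rw [fromBlocks_mulVec, sumElim_dotProduct_sumElim, dotProduct_add, dotProduct_add]
  simp only [Sum.elim_comp_inl, Sum.elim_comp_inr]
  ring

theorem sumElim_dotProduct_lmi_mulVec_sumElim (P M : Matrix ι ι R) (F : Matrix ι κ R)
    (Q : Matrix κ κ R) (β : R) (x : ι → R) (w : κ → R) :
    Sum.elim x w ⬝ᵥ
        (fromBlocks (P * M + Mᵀ * P + β • P) (P * F) (Fᵀ * P) (-β • Q) *ᵥ Sum.elim x w) =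
      (M *ᵥ x + F *ᵥ w) ⬝ᵥ (P *ᵥ x) + x ⬝ᵥ (P *ᵥ (M *ᵥ x + F *ᵥ w))
        + β * (x ⬝ᵥ (P *ᵥ x)) - β * (w ⬝ᵥ (Q *ᵥ w)) := by
  rw [sumElim_dotProduct_fromBlocks_mulVec_sumElim_s10]
  simp only [add_mulVec, smul_mulVec, neg_smul, neg_mulVec, ← mulVec_mulVec, mulVec_add,
    add_dotProduct, dotProduct_add, dotProduct_smul, dotProduct_neg, smul_eq_mul]
  rw [dotProduct_mulVec x Mᵀ, vecMul_transpose, dotProduct_mulVec w Fᵀ, vecMul_transpose]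
  ring

end LMI

theorem lyapunov_deriv_le_of_lmi {ι κ : Type*} [Fintype ι] [Fintype κ]
    {P M : Matrix ι ι ℝ} {F : Matrix ι κ ℝ} {Q : Matrix κ κ ℝ} {β : ℝ} (hβ : 0 ≤ β)
    (hLMI : ∀ v : ι ⊕ κ → ℝ,
      v ⬝ᵥ ((fromBlocks (P * M + Mᵀ * P + β • P) (P * F) (Fᵀ * P) (-β • Q)) *ᵥ v) ≤ 0)
    (x : ι → ℝ) {w : κ → ℝ} (hw : w ⬝ᵥ (Q *ᵥ w) ≤ 1) :
    (M *ᵥ x + F *ᵥ w) ⬝ᵥ (P *ᵥ x) + x ⬝ᵥ (P *ᵥ (M *ᵥ x + F *ᵥ w))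
      ≤ -β * (x ⬝ᵥ (P *ᵥ x) - 1) := by
  have h := hLMI (Sum.elim x w)
  rw [sumElim_dotProduct_lmi_mulVec_sumElim] at h
  nlinarith [mul_le_mul_of_nonneg_left hw hβ]

theorem lmi_implies_exponential_attractivity_general (n N p : ℕ)
    (Q : Matrix (Fin p) (Fin p) ℝ)
    (P : Matrix (Fin N × Fin n) (Fin N × Fin n) ℝ)
    (M : Matrix (Fin N × Fin n) (Fin N × Fin n) ℝ)
    (F : Matrix (Fin N × Fin n) (Fin p) ℝ)
    (β : ℝ) (hβ : 0 < β)
    (hLMI : ∀ v : (Fin N × Fin n) ⊕ Fin p → ℝ,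
      v ⬝ᵥ ((Matrix.fromBlocks (P * M + Mᵀ * P + β • P) (P * F) (Fᵀ * P) (-β • Q)) *ᵥ v) ≤ 0)
    (ω : ℝ → (Fin p → ℝ)) (hω : ∀ t : ℝ, 0 ≤ t → ω t ⬝ᵥ (Q *ᵥ ω t) ≤ 1)
    (e : ℝ → (Fin N × Fin n → ℝ))
    (he : ∀ t : ℝ, 0 ≤ t → HasDerivAt e (M *ᵥ e t + F *ᵥ ω t) t) :
    (∀ t : ℝ, 0 ≤ t →
        e t ⬝ᵥ (P *ᵥ e t) ≤ 1 + (e 0 ⬝ᵥ (P *ᵥ e 0) - 1) * Real.exp (-β * t)) ∧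
    (∀ ε : ℝ, 0 < ε → ∃ T : ℝ, 0 ≤ T ∧ ∀ t : ℝ, T ≤ t → e t ⬝ᵥ (P *ᵥ e t) ≤ 1 + ε) := by
  have hV : ∀ t, 0 ≤ t → e t ⬝ᵥ (P *ᵥ e t) ≤ 1 + (e 0 ⬝ᵥ (P *ᵥ e 0) - 1) * Real.exp (-β * t) :=
    fun t ht => le_add_mul_exp_of_hasDerivAt_le
      (fun s hs => (he s hs).dotProduct_s10 ((he s hs).const_mulVec P))
      (fun s hs => lyapunov_deriv_le_of_lmi hβ.le hLMI (e s) (hω s hs)) ht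
  exact ⟨hV, fun ε hε => exists_forall_ge_le_add_of_le_add_mul_exp hβ hV hε⟩

/-- If `β > 0` makes the block matrix
`[[P M + Mᵀ P + β P, P F], [Fᵀ P, -β Q]]` negative semidefinite, then along every
solution of the perturbed error system the function `V t = e tᵀ P (e t)` satisfies
`V t ≤ 1 + (V 0 - 1) exp (-β t)` for `t ≥ 0`; in particular `ε(P)` is attractive. -/
theorem lmi_implies_exponential_attractivity (n m N p : ℕ)
    (A : Matrix (Fin n) (Fin n) ℝ) (B : Matrix (Fin n) (Fin m) ℝ)
    (K : Matrix (Fin m) (Fin n) ℝ) (Ltil : Matrix (Fin N) (Fin N) ℝ)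
    (E : Matrix (Fin n) (Fin p) ℝ)
    (Q : Matrix (Fin p) (Fin p) ℝ) (hQ : Q.PosDef)
    (P : Matrix (Fin N × Fin n) (Fin N × Fin n) ℝ) (hP : P.PosDef)
    (M : Matrix (Fin N × Fin n) (Fin N × Fin n) ℝ)
    (hM : M = (1 : Matrix (Fin N) (Fin N) ℝ) ⊗ₖ A - Ltil ⊗ₖ (B * K))
    (F : Matrix (Fin N × Fin n) (Fin p) ℝ)
    (hF : ∀ (ij : Fin N × Fin n) (k : Fin p), F ij k = E ij.2 k)
    (β : ℝ) (hβ : 0 < β)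
    (hLMI : ∀ v : (Fin N × Fin n) ⊕ Fin p → ℝ,
      v ⬝ᵥ ((Matrix.fromBlocks (P * M + Mᵀ * P + β • P) (P * F) (Fᵀ * P) (-β • Q)) *ᵥ v) ≤ 0)
    (ω : ℝ → (Fin p → ℝ)) (hω : ∀ t : ℝ, 0 ≤ t → ω t ⬝ᵥ (Q *ᵥ ω t) ≤ 1)
    (e : ℝ → (Fin N × Fin n → ℝ))
    (he : ∀ t : ℝ, 0 ≤ t → HasDerivAt e (M *ᵥ e t + F *ᵥ ω t) t) :
    (∀ t : ℝ, 0 ≤ t →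
        e t ⬝ᵥ (P *ᵥ e t) ≤ 1 + (e 0 ⬝ᵥ (P *ᵥ e 0) - 1) * Real.exp (-β * t)) ∧
    (∀ ε : ℝ, 0 < ε → ∃ T : ℝ, 0 ≤ T ∧ ∀ t : ℝ, T ≤ t → e t ⬝ᵥ (P *ᵥ e t) ≤ 1 + ε) :=
  lmi_implies_exponential_attractivity_general n N p Q P M F β hβ hLMI ω hω e he
end

section
/- Suppose E ≠ 0, the ellipsoid ε(P) is invariant for the perturbed error system, and there exists a symmetric positive definite matrix P' with P' M + M^⊤ P' negative semidefinite (i.e., the gain K achieves leader-following consensus in the absence of disturbances). Then ε(P) is attractive: for every disturbance ω, every solution e of the perturbed error system, and every ε > 0, there exists T ≥ 0 such that e(t)^⊤ P e(t) ≤ 1 + ε for all t ≥ T. -/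
/-!
Invariance of `ε(P)` under constant admissible disturbances gives Nagumo's tangency condition
`xᵀP(Mx + Fν) ≤ 0` on the boundary of `ε(P)`; by homogeneity,
`xᵀPMx + √(xᵀPx) |xᵀPFν| ≤ 0` for every `x` and every admissible `ν`. If `xᵀPMx` vanished at some
`x ≠ 0`, perturbing `x` would force `Fν = 0`, so `F ≠ 0` makes `xᵀPMx` negative definite, whence
`xᵀPMx ≤ -λ xᵀPx` for some `λ > 0`. Outside `ε(P)` this yields
`d/dt (eᵀPe) ≤ -λ (eᵀPe - 1)`: the trajectory enters the level set `eᵀPe ≤ 1 + ε` in finite time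
and never leaves it.
-/

open Matrix
open scoped Kronecker

theorem HasDerivAt.nonpos_of_forall_le {f : ℝ → ℝ} {f' a : ℝ} (hf : HasDerivAt f f' a)
    (hmax : ∀ t, a ≤ t → f t ≤ f a) : f' ≤ 0 := by
  have hmaxOn : IsLocalMaxOn f (Set.Ici a) a := Filter.eventually_of_mem self_mem_nhdsWithin hmax
  have hcone : (1 : ℝ) ∈ posTangentConeAt (Set.Ici a) a :=
    mem_posTangentConeAt_of_segment_subset (by simpa [segment_eq_Icc] using Set.Icc_subset_Ici_self)
  simpa using hmaxOn.hasFDerivWithinAt_nonpos hf.hasFDerivAt.hasFDerivWithinAt hcone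

theorem exists_forall_le_of_hasDerivAt_le_neg {f f' : ℝ → ℝ} {K c : ℝ} (hc : 0 < c)
    (hf : ∀ t, 0 ≤ t → HasDerivAt f (f' t) t) (hf' : ∀ t, 0 ≤ t → K ≤ f t → f' t ≤ -c) :
    ∃ T, 0 ≤ T ∧ ∀ t, T ≤ t → f t ≤ K := by
  obtain ⟨T, hT, hfT⟩ : ∃ T, 0 ≤ T ∧ f T ≤ K := by
    by_contra! hgt
    set T := (f 0 - K) / c + 1
    have hT : 0 < T := by have := hgt 0 le_rfl; positivity
    obtain ⟨ξ, hξ, hslope⟩ := exists_hasDerivAt_eq_slope f f' hT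
      (fun t ht => (hf t ht.1).continuousAt.continuousWithinAt) fun t ht => hf t ht.1.le
    have := hf' ξ hξ.1.le (hgt ξ hξ.1.le).le
    rw [hslope, sub_zero, div_le_iff₀ hT] at this
    have hcT : c * T = f 0 - K + c := by simp only [T]; field_simp
    linarith [hgt T hT.le]
  refine ⟨T, hT, fun t ht => ?_⟩
  refine image_le_of_deriv_right_lt_deriv_boundary (f' := f') (B' := 0) (a := T) (b := t)
    (fun s hs => (hf s (hT.trans hs.1)).continuousAt.continuousWithinAt)
    (fun s hs => (hf s (hT.trans hs.1)).hasDerivWithinAt) hfT (fun _ => hasDerivAt_const _ K)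
    (fun s hs hfs => (hf' s (hT.trans hs.1) hfs.ge).trans_lt (neg_lt_zero.2 hc)) ⟨ht, le_rfl⟩

section LinearSystems

variable {ι κ : Type*} [Fintype ι] [Fintype κ]

theorem Matrix.exists_hasDerivAt_mulVec_add (M : Matrix ι ι ℝ) (c x₀ : ι → ℝ) :
    ∃ e : ℝ → ι → ℝ, e 0 = x₀ ∧ ∀ t, HasDerivAt e (M *ᵥ e t + c) t := by
  let L : (ι → ℝ) →L[ℝ] ι → ℝ := LinearMap.toContinuousLinearMap M.mulVecLin
  have hL : ∀ v, M *ᵥ v = L v := fun _ => rfl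
  let φ : ℝ → (ι → ℝ) →L[ℝ] ι → ℝ := fun t => NormedSpace.exp (t • L)
  have hφ : ∀ v t, HasDerivAt (fun t => φ t v) (L (φ t v)) t := fun v t => by
    simpa using (hasDerivAt_exp_smul_const' L t).clm_apply (hasDerivAt_const t v)
  have hcont : Continuous fun t => φ t c :=
    continuous_iff_continuousAt.2 fun t => (hφ c t).continuousAt
  have hint : ∀ t, L (∫ s in 0..t, φ s c) = φ t c - c := fun t => by
    rw [← L.intervalIntegral_comp_comm (hcont.intervalIntegrable 0 t),
      intervalIntegral.integral_eq_sub_of_hasDerivAt (fun s _ => hφ c s)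
        ((L.continuous.comp hcont).intervalIntegrable 0 t)]
    simp [φ]
  refine ⟨fun t => φ t x₀ + ∫ s in 0..t, φ s c, by simp [φ], fun t => ?_⟩
  refine ((hφ x₀ t).add (hcont.integral_hasStrictDerivAt 0 t).hasDerivAt).congr_deriv ?_
  rw [hL, map_add, hint]
  abel

theorem Matrix.IsSymm.dotProduct_mulVec_comm {P : Matrix ι ι ℝ} (hP : P.IsSymm) (x y : ι → ℝ) :
    x ⬝ᵥ P *ᵥ y = y ⬝ᵥ P *ᵥ x := by
  rw [dotProduct_mulVec, ← mulVec_transpose, hP.eq, dotProduct_comm]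

theorem HasDerivAt.dotProduct_mulVec_self {P : Matrix ι ι ℝ} (hP : P.IsSymm) {e : ℝ → ι → ℝ}
    {e' : ι → ℝ} {t : ℝ} (he : HasDerivAt e e' t) :
    HasDerivAt (fun s => e s ⬝ᵥ P *ᵥ e s) (2 * (e t ⬝ᵥ P *ᵥ e')) t := by
  have hPe : HasDerivAt (fun s => P *ᵥ e s) (P *ᵥ e') t :=
    (LinearMap.toContinuousLinearMap P.mulVecLin).hasFDerivAt.comp_hasDerivAt t he
  refine (HasDerivAt.fun_sum fun i _ =>
    (hasDerivAt_pi.1 he i).mul (hasDerivAt_pi.1 hPe i)).congr_deriv ?_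
  rw [Finset.sum_add_distrib, two_mul]
  exact congrArg (· + _) (hP.dotProduct_mulVec_comm e' (e t))

theorem Matrix.dotProduct_smul_mulVec_smul (A : Matrix ι ι ℝ) (c : ℝ) (x : ι → ℝ) :
    (c • x) ⬝ᵥ A *ᵥ (c • x) = c ^ 2 * (x ⬝ᵥ A *ᵥ x) := by
  simp only [mulVec_smul, dotProduct_smul, smul_dotProduct, smul_eq_mul]
  ring

theorem Matrix.dotProduct_mulVec_nonneg_of_forall_sphere {A : Matrix ι ι ℝ}
    (hA : ∀ u ∈ Metric.sphere (0 : ι → ℝ) 1, 0 ≤ u ⬝ᵥ A *ᵥ u) (x : ι → ℝ) :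
    0 ≤ x ⬝ᵥ A *ᵥ x := by
  rcases eq_or_ne x 0 with rfl | hx
  · simp
  have hu : ‖x‖⁻¹ • x ∈ Metric.sphere (0 : ι → ℝ) 1 := by simp [norm_smul, hx]
  have := hA _ hu
  rw [dotProduct_smul_mulVec_smul] at this
  have : 0 < ‖x‖⁻¹ ^ 2 := by positivity
  nlinarith

theorem Matrix.exists_pos_mul_dotProduct_mulVec_le (P R : Matrix ι ι ℝ)
    (hR : ∀ x ≠ 0, 0 < x ⬝ᵥ R *ᵥ x) :
    ∃ l > 0, ∀ x, l * (x ⬝ᵥ P *ᵥ x) ≤ x ⬝ᵥ R *ᵥ x := by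
  have hS := isCompact_sphere (0 : ι → ℝ) 1
  have hcont : ∀ A : Matrix ι ι ℝ, Continuous fun x : ι → ℝ => x ⬝ᵥ A *ᵥ x := fun A => by
    fun_prop
  obtain ⟨μ, hμ, hRμ⟩ := hS.exists_forall_le' (hcont R).continuousOn
    fun u hu => hR u (ne_zero_of_mem_sphere one_ne_zero ⟨u, hu⟩)
  obtain ⟨C, hC⟩ := hS.bddAbove_image (hcont P).continuousOn
  have hC₁ : 0 < max C 1 := lt_max_of_lt_right one_pos
  refine ⟨μ / max C 1, div_pos hμ hC₁, fun x => ?_⟩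
  have := dotProduct_mulVec_nonneg_of_forall_sphere (A := R - (μ / max C 1) • P)
    (fun u hu => ?_) x
  · simpa [sub_mulVec, smul_mulVec] using this
  have hPu : u ⬝ᵥ P *ᵥ u ≤ max C 1 := (hC ⟨u, hu, rfl⟩).trans (le_max_left _ _)
  have : μ / max C 1 * (u ⬝ᵥ P *ᵥ u) ≤ μ := by
    rw [div_mul_eq_mul_div, div_le_iff₀ hC₁]
    exact mul_le_mul_of_nonneg_left hPu hμ.le
  simp only [sub_mulVec, smul_mulVec, dotProduct_sub, dotProduct_smul, smul_eq_mul]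
  linarith [hRμ u hu]

section Homogenized

variable {P M : Matrix ι ι ℝ} {w : ι → ℝ}

theorem Matrix.dotProduct_mulVec_add_sqrt_mul_nonpos (hP : P.PosDef)
    (hw : ∀ u, u ⬝ᵥ P *ᵥ u = 1 → u ⬝ᵥ P *ᵥ (M *ᵥ u + w) ≤ 0) (x : ι → ℝ) :
    x ⬝ᵥ P *ᵥ (M *ᵥ x) + √(x ⬝ᵥ P *ᵥ x) * (x ⬝ᵥ P *ᵥ w) ≤ 0 := by
  rcases eq_or_ne x 0 with rfl | hx
  · simp
  have hV : 0 < x ⬝ᵥ P *ᵥ x := by simpa using hP.dotProduct_mulVec_pos hx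
  set s := √(x ⬝ᵥ P *ᵥ x)
  have hs : 0 < s := Real.sqrt_pos.2 hV
  have hu := hw (s⁻¹ • x) (by
    rw [dotProduct_smul_mulVec_smul, inv_pow, Real.sq_sqrt hV.le, inv_mul_cancel₀ hV.ne'])
  simp only [mulVec_add, mulVec_smul, dotProduct_add, dotProduct_smul, smul_dotProduct,
    smul_eq_mul] at hu
  have : s * s * (s⁻¹ * (s⁻¹ * (x ⬝ᵥ P *ᵥ (M *ᵥ x))) + s⁻¹ * (x ⬝ᵥ P *ᵥ w)) ≤ 0 :=
    mul_nonpos_of_nonneg_of_nonpos (by positivity) hu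
  field_simp at this
  linarith

theorem Matrix.polar_add_sqrt_mul_abs_nonpos_of_eq_zero
    (hw : ∀ x, x ⬝ᵥ P *ᵥ (M *ᵥ x) + √(x ⬝ᵥ P *ᵥ x) * |x ⬝ᵥ P *ᵥ w| ≤ 0) {x₀ : ι → ℝ}
    (hq : x₀ ⬝ᵥ P *ᵥ (M *ᵥ x₀) = 0) (hx₀w : x₀ ⬝ᵥ P *ᵥ w = 0) (y : ι → ℝ) :
    x₀ ⬝ᵥ P *ᵥ (M *ᵥ y) + y ⬝ᵥ P *ᵥ (M *ᵥ x₀) + √(x₀ ⬝ᵥ P *ᵥ x₀) * |y ⬝ᵥ P *ᵥ w| ≤ 0 := by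
  set b := x₀ ⬝ᵥ P *ᵥ (M *ᵥ y) + y ⬝ᵥ P *ᵥ (M *ᵥ x₀)
  -- `t * g t` is the left-hand side of `hw` at `x₀ + t • y`
  set g : ℝ → ℝ := fun t =>
    b + t * (y ⬝ᵥ P *ᵥ (M *ᵥ y)) + √((x₀ + t • y) ⬝ᵥ P *ᵥ (x₀ + t • y)) * |y ⬝ᵥ P *ᵥ w|
  have hg : ∀ t ∈ Set.Ioi (0 : ℝ), g t ≤ 0 := fun t (ht : 0 < t) => by
    have hM : (x₀ + t • y) ⬝ᵥ P *ᵥ (M *ᵥ (x₀ + t • y)) =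
        t * (b + t * (y ⬝ᵥ P *ᵥ (M *ᵥ y))) := by
      simp only [b, mulVec_add, mulVec_smul, dotProduct_add, add_dotProduct, dotProduct_smul,
        smul_dotProduct, smul_eq_mul, hq]
      ring
    have hW : (x₀ + t • y) ⬝ᵥ P *ᵥ w = t * (y ⬝ᵥ P *ᵥ w) := by simp [add_dotProduct, hx₀w]
    have h := hw (x₀ + t • y)
    rw [hM, hW, abs_mul, abs_of_pos ht] at h
    exact nonpos_of_mul_nonpos_right (by linarith) ht
  have hcont : ContinuousAt g 0 := by fun_prop
  simpa [g] using le_of_tendsto (hcont.tendsto.mono_left nhdsWithin_le_nhds)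
    (eventually_nhdsWithin_of_forall hg)

theorem Matrix.dotProduct_mulVec_mulVec_neg (hP : P.PosDef) (hw₀ : w ≠ 0)
    (hw : ∀ x, x ⬝ᵥ P *ᵥ (M *ᵥ x) + √(x ⬝ᵥ P *ᵥ x) * |x ⬝ᵥ P *ᵥ w| ≤ 0) {x : ι → ℝ}
    (hx : x ≠ 0) : x ⬝ᵥ P *ᵥ (M *ᵥ x) < 0 := by
  have hs : 0 < √(x ⬝ᵥ P *ᵥ x) := Real.sqrt_pos.2 (by simpa using hP.dotProduct_mulVec_pos hx)
  have hq : x ⬝ᵥ P *ᵥ (M *ᵥ x) ≤ 0 := by nlinarith [hw x, abs_nonneg (x ⬝ᵥ P *ᵥ w)]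
  refine hq.lt_of_ne fun hq₀ => hw₀ ?_
  have hxw : x ⬝ᵥ P *ᵥ w = 0 := by
    have := hw x
    rw [hq₀, zero_add] at this
    exact abs_nonpos_iff.1 (nonpos_of_mul_nonpos_right this hs)
  have hyw : ∀ y, y ⬝ᵥ P *ᵥ w = 0 := fun y => by
    have h₁ := polar_add_sqrt_mul_abs_nonpos_of_eq_zero hw hq₀ hxw y
    have h₂ := polar_add_sqrt_mul_abs_nonpos_of_eq_zero hw hq₀ hxw (-y)
    simp only [mulVec_neg, dotProduct_neg, neg_dotProduct, abs_neg] at h₂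
    have : √(x ⬝ᵥ P *ᵥ x) * |y ⬝ᵥ P *ᵥ w| ≤ 0 := by linarith
    exact abs_nonpos_iff.1 (nonpos_of_mul_nonpos_right this hs)
  by_contra hw
  simpa [hyw w] using hP.dotProduct_mulVec_pos hw

theorem Matrix.dotProduct_mulVec_add_le_of_one_le {x : ι → ℝ} {l : ℝ} (hl : 0 ≤ l)
    (hw : x ⬝ᵥ P *ᵥ (M *ᵥ x) + √(x ⬝ᵥ P *ᵥ x) * |x ⬝ᵥ P *ᵥ w| ≤ 0)
    (hgap : l * (x ⬝ᵥ P *ᵥ x) ≤ -(x ⬝ᵥ P *ᵥ (M *ᵥ x))) (hx : 1 ≤ x ⬝ᵥ P *ᵥ x) :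
    x ⬝ᵥ P *ᵥ (M *ᵥ x + w) ≤ -(l / 2 * (x ⬝ᵥ P *ᵥ x - 1)) := by
  rw [mulVec_add, dotProduct_add]
  set s := √(x ⬝ᵥ P *ᵥ x)
  have hs2 : s ^ 2 = x ⬝ᵥ P *ᵥ x := Real.sq_sqrt (by linarith)
  have hs1 : 1 ≤ s := Real.one_le_sqrt.2 hx
  rw [← hs2] at hgap ⊢
  nlinarith [le_abs_self (x ⬝ᵥ P *ᵥ w),
    mul_nonneg hl (mul_nonneg (sub_nonneg.2 hs1) (sub_nonneg.2 hs1))]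

end Homogenized

def IsInvariantEllipsoid (M : Matrix ι ι ℝ) (F : Matrix ι κ ℝ) (Q : Matrix κ κ ℝ)
    (P : Matrix ι ι ℝ) : Prop :=
  ∀ ω : ℝ → κ → ℝ, (∀ t, 0 ≤ t → ω t ⬝ᵥ Q *ᵥ ω t ≤ 1) →
    ∀ e : ℝ → ι → ℝ, (∀ t, 0 ≤ t → HasDerivAt e (M *ᵥ e t + F *ᵥ ω t) t) →
      e 0 ⬝ᵥ P *ᵥ e 0 ≤ 1 → ∀ t, 0 ≤ t → e t ⬝ᵥ P *ᵥ e t ≤ 1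

variable {M P : Matrix ι ι ℝ} {F : Matrix ι κ ℝ} {Q : Matrix κ κ ℝ}

theorem IsInvariantEllipsoid.dotProduct_mulVec_add_nonpos (hinv : IsInvariantEllipsoid M F Q P)
    (hP : P.IsSymm) {x : ι → ℝ} (hx : x ⬝ᵥ P *ᵥ x = 1) {ν : κ → ℝ} (hν : ν ⬝ᵥ Q *ᵥ ν ≤ 1) :
    x ⬝ᵥ P *ᵥ (M *ᵥ x + F *ᵥ ν) ≤ 0 := by
  obtain ⟨e, he₀, he⟩ := M.exists_hasDerivAt_mulVec_add (F *ᵥ ν) x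
  have hmax : ∀ t, 0 ≤ t → e t ⬝ᵥ P *ᵥ e t ≤ e 0 ⬝ᵥ P *ᵥ e 0 := by
    rw [he₀, hx]
    exact hinv (fun _ => ν) (fun _ _ => hν) e (fun t _ => he t) (by rw [he₀, hx])
  have := ((he 0).dotProduct_mulVec_self hP).nonpos_of_forall_le hmax
  rw [he₀] at this
  linarith

theorem IsInvariantEllipsoid.add_sqrt_mul_abs_nonpos (hinv : IsInvariantEllipsoid M F Q P)
    (hP : P.PosDef) {ν : κ → ℝ} (hν : ν ⬝ᵥ Q *ᵥ ν ≤ 1) (x : ι → ℝ) :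
    x ⬝ᵥ P *ᵥ (M *ᵥ x) + √(x ⬝ᵥ P *ᵥ x) * |x ⬝ᵥ P *ᵥ (F *ᵥ ν)| ≤ 0 := by
  have hPs : P.IsSymm := isHermitian_iff_isSymm.1 hP.isHermitian
  have h₁ := dotProduct_mulVec_add_sqrt_mul_nonpos hP
    (fun u hu => hinv.dotProduct_mulVec_add_nonpos hPs hu hν) x
  have hν' : (-ν) ⬝ᵥ Q *ᵥ (-ν) ≤ 1 := by simpa [mulVec_neg] using hν
  have h₂ := dotProduct_mulVec_add_sqrt_mul_nonpos hP
    (fun u hu => hinv.dotProduct_mulVec_add_nonpos hPs hu hν') x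
  simp only [mulVec_neg, dotProduct_neg] at h₂
  rcases abs_cases (x ⬝ᵥ P *ᵥ (F *ᵥ ν)) with ⟨h, -⟩ | ⟨h, -⟩ <;> rw [h] <;> linarith

end LinearSystems

theorem Matrix.exists_mulVec_ne_zero_of_le_one {ι κ : Type*} [Fintype κ] {F : Matrix ι κ ℝ}
    (hF : F ≠ 0) (Q : Matrix κ κ ℝ) :
    ∃ ν, ν ⬝ᵥ Q *ᵥ ν ≤ 1 ∧ F *ᵥ ν ≠ 0 := by
  obtain ⟨ν, hν⟩ : ∃ ν, F *ᵥ ν ≠ 0 := by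
    by_contra! h
    exact hF (mulVec_injective (funext fun ν => by simp [h ν]))
  set a := ν ⬝ᵥ Q *ᵥ ν
  have hc : 0 < (|a| + 1)⁻¹ := by positivity
  refine ⟨(|a| + 1)⁻¹ • ν, ?_, by simp [mulVec_smul, hc.ne', hν]⟩
  rw [dotProduct_smul_mulVec_smul]
  have : (|a| + 1)⁻¹ * (|a| + 1) = 1 := inv_mul_cancel₀ (by positivity)
  nlinarith [le_abs_self a, abs_nonneg a]

theorem invariant_ellipsoid_is_attractive_general (n N p : ℕ)
    (E : Matrix (Fin n) (Fin p) ℝ) (hE : E ≠ 0)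
    (Q : Matrix (Fin p) (Fin p) ℝ)
    (P : Matrix (Fin N × Fin n) (Fin N × Fin n) ℝ) (hP : P.PosDef)
    (M : Matrix (Fin N × Fin n) (Fin N × Fin n) ℝ)
    (F : Matrix (Fin N × Fin n) (Fin p) ℝ)
    (hF : ∀ (ij : Fin N × Fin n) (k : Fin p), F ij k = E ij.2 k)
    (hinv : ∀ ω : ℝ → (Fin p → ℝ), (∀ t : ℝ, 0 ≤ t → ω t ⬝ᵥ (Q *ᵥ ω t) ≤ 1) →
      ∀ e : ℝ → (Fin N × Fin n → ℝ),
        (∀ t : ℝ, 0 ≤ t → HasDerivAt e (M *ᵥ e t + F *ᵥ ω t) t) →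
        e 0 ⬝ᵥ (P *ᵥ e 0) ≤ 1 →
        ∀ t : ℝ, 0 ≤ t → e t ⬝ᵥ (P *ᵥ e t) ≤ 1) :
    ∀ ω : ℝ → (Fin p → ℝ), (∀ t : ℝ, 0 ≤ t → ω t ⬝ᵥ (Q *ᵥ ω t) ≤ 1) →
      ∀ e : ℝ → (Fin N × Fin n → ℝ),
        (∀ t : ℝ, 0 ≤ t → HasDerivAt e (M *ᵥ e t + F *ᵥ ω t) t) →
        ∀ ε : ℝ, 0 < ε → ∃ T : ℝ, 0 ≤ T ∧
          ∀ t : ℝ, T ≤ t → e t ⬝ᵥ (P *ᵥ e t) ≤ 1 + ε := by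
  intro ω hω e he ε hε
  replace hinv : IsInvariantEllipsoid M F Q P := hinv
  have hneg : ∀ x ≠ 0, x ⬝ᵥ P *ᵥ (M *ᵥ x) < 0 := fun x hx => by
    obtain ⟨j, -⟩ := Function.ne_iff.1 hx
    have hF₀ : F ≠ 0 := fun h => hE (by
      ext i k
      simpa [hF] using congrFun (congrFun h (j.1, i)) k)
    obtain ⟨ν, hν, hFν⟩ := exists_mulVec_ne_zero_of_le_one hF₀ Q
    exact dotProduct_mulVec_mulVec_neg hP hFν (hinv.add_sqrt_mul_abs_nonpos hP hν) hx
  obtain ⟨l, hl, hgap⟩ := exists_pos_mul_dotProduct_mulVec_le P (-(P * M)) fun x hx => by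
    simpa [neg_mulVec, mulVec_mulVec] using hneg x hx
  refine exists_forall_le_of_hasDerivAt_le_neg (mul_pos hl hε)
    (fun t ht => (he t ht).dotProduct_mulVec_self (isHermitian_iff_isSymm.1 hP.isHermitian))
    fun t ht hV => ?_
  have := dotProduct_mulVec_add_le_of_one_le hl.le (hinv.add_sqrt_mul_abs_nonpos hP (hω t ht) _)
    (by simpa [neg_mulVec, mulVec_mulVec] using hgap (e t)) (by linarith)
  nlinarith

/-- **Corollary 1.** If `E ≠ 0`, the ellipsoid `ε(P)` is invariant for
the perturbed error system, and there is a symmetric positive definite `P'` with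
`P' M + Mᵀ P'` negative semidefinite (leader-following consensus without
disturbances), then `ε(P)` is attractive. -/
theorem invariant_ellipsoid_is_attractive (n m N p : ℕ)
    (A : Matrix (Fin n) (Fin n) ℝ) (B : Matrix (Fin n) (Fin m) ℝ)
    (K : Matrix (Fin m) (Fin n) ℝ) (Ltil : Matrix (Fin N) (Fin N) ℝ)
    (E : Matrix (Fin n) (Fin p) ℝ) (hE : E ≠ 0)
    (Q : Matrix (Fin p) (Fin p) ℝ) (hQ : Q.PosDef)
    (P : Matrix (Fin N × Fin n) (Fin N × Fin n) ℝ) (hP : P.PosDef)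
    (M : Matrix (Fin N × Fin n) (Fin N × Fin n) ℝ)
    (hM : M = (1 : Matrix (Fin N) (Fin N) ℝ) ⊗ₖ A - Ltil ⊗ₖ (B * K))
    (F : Matrix (Fin N × Fin n) (Fin p) ℝ)
    (hF : ∀ (ij : Fin N × Fin n) (k : Fin p), F ij k = E ij.2 k)
    (hinv : ∀ ω : ℝ → (Fin p → ℝ), (∀ t : ℝ, 0 ≤ t → ω t ⬝ᵥ (Q *ᵥ ω t) ≤ 1) →
      ∀ e : ℝ → (Fin N × Fin n → ℝ),
        (∀ t : ℝ, 0 ≤ t → HasDerivAt e (M *ᵥ e t + F *ᵥ ω t) t) →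
        e 0 ⬝ᵥ (P *ᵥ e 0) ≤ 1 →
        ∀ t : ℝ, 0 ≤ t → e t ⬝ᵥ (P *ᵥ e t) ≤ 1)
    (hcons : ∃ P' : Matrix (Fin N × Fin n) (Fin N × Fin n) ℝ, P'.PosDef ∧
      ∀ x : Fin N × Fin n → ℝ, x ⬝ᵥ ((P' * M + Mᵀ * P') *ᵥ x) ≤ 0) :
    ∀ ω : ℝ → (Fin p → ℝ), (∀ t : ℝ, 0 ≤ t → ω t ⬝ᵥ (Q *ᵥ ω t) ≤ 1) →
      ∀ e : ℝ → (Fin N × Fin n → ℝ),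
        (∀ t : ℝ, 0 ≤ t → HasDerivAt e (M *ᵥ e t + F *ᵥ ω t) t) →
        ∀ ε : ℝ, 0 < ε → ∃ T : ℝ, 0 ≤ T ∧
          ∀ t : ℝ, T ≤ t → e t ⬝ᵥ (P *ᵥ e t) ≤ 1 + ε :=
  invariant_ellipsoid_is_attractive_general n N p E hE Q P hP M F hF hinv
end

section
/- Let A ∈ ℝ^{d×d} be Hurwitz and E ∈ ℝ^{d×p}. Let X₀ ∈ ℝ^{d×d} be a symmetric matrix satisfying A X₀ + X₀ A^⊤ + E E^⊤ = 0. Then for every symmetric matrix X ∈ ℝ^{d×d} with A X + X A^⊤ + E E^⊤ negative semidefinite, one has X − X₀ positive semidefinite, and consequently tr(X) ≥ tr(X₀). In other words, the solution of the Lyapunov equation minimizes the trace over all symmetric matrices satisfying the Lyapunov inequality. -/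
open Matrix NormedSpace Filter Topology
open scoped NNReal

/-!
With `Δ = X - X₀`, subtracting the Lyapunov equation from the inequality gives
`A Δ + Δ Aᵀ ⪯ 0`. For each vector `v`, `g t = vᵀ e^{tA} Δ e^{tAᵀ} v` has derivative
`vᵀ e^{tA} (A Δ + Δ Aᵀ) e^{tAᵀ} v ≤ 0` and tends to `0`, since `e^{tA} → 0` for Hurwitz `A`;
so `vᵀ Δ v = g 0 ≥ 0`, and `tr Δ` is the sum of these forms at the basis vectors.

The decay of `e^{tA}`: `e^A` is a polynomial in `A`, so its spectrum is `exp` of the spectrum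
of `A` and lies in the open unit disc. Gelfand's formula then gives `(e^A)ⁿ → 0`, and
`e^{tA} = (e^A)^⌊t⌋ e^{(t - ⌊t⌋) A}` where the second factor stays bounded.
-/

section BanachAlgebra

variable {𝔸 : Type*} [NormedRing 𝔸] [CompleteSpace 𝔸]

theorem tendsto_pow_atTop_nhds_zero_of_spectralRadius_lt_one [NormedAlgebra ℂ 𝔸] {a : 𝔸}
    (h : spectralRadius ℂ a < 1) :
    Tendsto (a ^ ·) atTop (𝓝 0) := by
  obtain ⟨c, hac, hc⟩ := exists_between h
  lift c to ℝ≥0 using hc.ne_top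
  have hc1 : (c : ℝ) < 1 := mod_cast hc
  have hbound : ∀ᶠ n : ℕ in atTop, ‖a ^ n‖ ≤ (c : ℝ) ^ n := by
    have hgelfand := spectrum.pow_norm_pow_one_div_tendsto_nhds_spectralRadius a
    filter_upwards [hgelfand.eventually_lt_const hac, eventually_gt_atTop 0] with n hn hn0
    rw [one_div, ENNReal.ofReal_lt_iff_lt_toReal (by positivity) ENNReal.coe_ne_top,
      ENNReal.coe_toReal] at hn
    exact_mod_cast ((Real.rpow_inv_lt_iff_of_pos (norm_nonneg _) c.2 (Nat.cast_pos.2 hn0)).1 hn).le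
  exact squeeze_zero_norm' hbound (tendsto_pow_atTop_nhds_zero_of_lt_one c.2 hc1)

theorem tendsto_exp_smul_atTop_nhds_zero_of_tendsto_pow [NormedAlgebra ℝ 𝔸] {a : 𝔸}
    (h : Tendsto (exp a ^ ·) atTop (𝓝 0)) :
    Tendsto (fun t : ℝ => exp (t • a)) atTop (𝓝 0) := by
  let _ : NormedAlgebra ℚ 𝔸 := NormedAlgebra.restrictScalars ℚ ℝ 𝔸
  have hcont : Continuous fun s : ℝ => exp (s • a) :=
    exp_continuous.comp (continuous_id.smul continuous_const)
  obtain ⟨K, hK⟩ := (isCompact_Icc (a := (0 : ℝ)) (b := 1)).exists_bound_of_continuousOn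
    hcont.continuousOn
  have hsplit : ∀ t : ℝ, 0 ≤ t → ‖exp (t • a)‖ ≤ ‖exp a ^ ⌊t⌋₊‖ * K := by
    intro t ht
    have hfrac : t - ⌊t⌋₊ ∈ Set.Icc (0 : ℝ) 1 :=
      ⟨sub_nonneg.2 (Nat.floor_le ht), by linarith [Nat.lt_floor_add_one t]⟩
    have heq : exp (t • a) = exp a ^ ⌊t⌋₊ * exp ((t - ⌊t⌋₊) • a) := by
      rw [← NormedSpace.exp_nsmul,
        ← NormedSpace.exp_add_of_commute ((Commute.refl a).smul_left _ |>.smul_right _),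
        ← Nat.cast_smul_eq_nsmul ℝ, ← add_smul, add_sub_cancel]
    rw [heq]
    exact (norm_mul_le _ _).trans (mul_le_mul_of_nonneg_left (hK _ hfrac) (norm_nonneg _))
  have hlim : Tendsto (fun t : ℝ => ‖exp a ^ ⌊t⌋₊‖ * K) atTop (𝓝 0) := by
    simpa using ((tendsto_norm_zero.comp h).comp tendsto_nat_floor_atTop).mul_const K
  exact squeeze_zero_norm' (eventually_ge_atTop 0 |>.mono hsplit) hlim

end BanachAlgebra

namespace Matrix

section QuadraticForm

variable {m n R : Type*} [Fintype m] [Fintype n]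

theorem dotProduct_mul_mul_transpose_mulVec [CommSemiring R] (P : Matrix m n R)
    (S : Matrix n n R) (v : m → R) :
    v ⬝ᵥ ((P * S * Pᵀ) *ᵥ v) = (Pᵀ *ᵥ v) ⬝ᵥ (S *ᵥ (Pᵀ *ᵥ v)) := by
  rw [← mulVec_mulVec, ← mulVec_mulVec, dotProduct_mulVec, ← mulVec_transpose]

theorem trace_nonneg_of_forall_dotProduct_mulVec_nonneg [DecidableEq n] [CommSemiring R]
    [PartialOrder R] [IsOrderedAddMonoid R] {M : Matrix n n R}
    (hM : ∀ v, 0 ≤ v ⬝ᵥ (M *ᵥ v)) : 0 ≤ M.trace :=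
  Finset.sum_nonneg fun i _ => by simpa using hM (Pi.single i 1)

end QuadraticForm

section Exponential

variable {n : Type*} [Fintype n] [DecidableEq n]

attribute [local instance] Matrix.linftyOpNormedRing Matrix.linftyOpNormedAlgebra

theorem exists_aeval_eq_exp (M : Matrix n n ℂ) :
    ∃ q : Polynomial ℂ, Polynomial.aeval M q = exp M := by
  have hclosed : IsClosed ((Algebra.adjoin ℂ {M} : Subalgebra ℂ (Matrix n n ℂ)) :
      Set (Matrix n n ℂ)) :=
    (Subalgebra.toSubmodule (Algebra.adjoin ℂ {M})).closed_of_finiteDimensional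
  have := exp_mem (R := ℂ) hclosed (Algebra.self_mem_adjoin_singleton ℂ M)
  rwa [Algebra.adjoin_singleton_eq_range_aeval] at this

theorem exp_mulVec_of_mulVec_eq_smul {M : Matrix n n ℂ} {μ : ℂ} {u : n → ℂ}
    (hu : M *ᵥ u = μ • u) : exp M *ᵥ u = Complex.exp μ • u := by
  have hpow : ∀ k : ℕ, (M ^ k) *ᵥ u = μ ^ k • u := by
    intro k
    induction k with
    | zero => simp
    | succ k ih => rw [pow_succ, ← mulVec_mulVec, hu, mulVec_smul, ih, smul_smul, pow_succ']
  have hM : HasSum (fun k : ℕ => ((k.factorial : ℂ)⁻¹ • M ^ k) *ᵥ u) (exp M *ᵥ u) :=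
    (exp_series_hasSum_exp' (𝕂 := ℂ) M).map (mulVec.addMonoidHomLeft u)
      (continuous_id.matrix_mulVec continuous_const)
  simp only [smul_mulVec, hpow, smul_smul] at hM
  have hμ : HasSum (fun k : ℕ => ((k.factorial : ℂ)⁻¹ * μ ^ k) • u) (Complex.exp μ • u) := by
    simpa [Complex.exp_eq_exp_ℂ, smul_eq_mul] using
      (exp_series_hasSum_exp' (𝕂 := ℂ) μ).smul_const u
  exact hM.unique hμ

theorem spectrum_exp_subset (M : Matrix n n ℂ) :
    spectrum ℂ (exp M) ⊆ Complex.exp '' spectrum ℂ M := by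
  cases isEmpty_or_nonempty n
  · simp [spectrum.of_subsingleton]
  obtain ⟨q, hq⟩ := exists_aeval_eq_exp M
  rw [← hq, spectrum.map_polynomial_aeval]
  rintro _ ⟨μ, hμ, rfl⟩
  refine ⟨μ, hμ, ?_⟩
  rw [← spectrum_toLin', ← Module.End.hasEigenvalue_iff_mem_spectrum] at hμ
  obtain ⟨u, hu⟩ := hμ.exists_hasEigenvector
  have hq_u : Polynomial.aeval M q *ᵥ u = q.eval μ • u := by
    have := Module.End.aeval_apply_of_hasEigenvector (p := q) hu
    rwa [show toLin' M = toLinAlgEquiv' M from rfl, Polynomial.aeval_algHom_apply,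
      toLinAlgEquiv'_apply] at this
  have hexp_u : exp M *ᵥ u = Complex.exp μ • u :=
    exp_mulVec_of_mulVec_eq_smul (by simpa using hu.apply_eq_smul)
  exact smul_left_injective ℂ hu.2 (hexp_u.symm.trans (hq ▸ hq_u))

theorem spectralRadius_exp_lt_one {M : Matrix n n ℂ} (hM : ∀ μ ∈ spectrum ℂ M, μ.re < 0) :
    spectralRadius ℂ (exp M) < 1 := by
  cases isEmpty_or_nonempty n
  · simp [spectralRadius, spectrum.of_subsingleton]
  have := spectrum.spectralRadius_lt_of_forall_lt (exp M) (r := 1) fun z hz => by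
    obtain ⟨μ, hμ, rfl⟩ := spectrum_exp_subset M hz
    have : ‖Complex.exp μ‖ < 1 := by
      rw [Complex.norm_exp]
      exact Real.exp_lt_one_iff.mpr (hM μ hμ)
    exact_mod_cast this
  simpa using this

theorem tendsto_exp_smul_atTop_nhds_zero_of_spectrum_re_neg {M : Matrix n n ℂ}
    (hM : ∀ μ ∈ spectrum ℂ M, μ.re < 0) :
    Tendsto (fun t : ℝ => exp (t • M)) atTop (𝓝 0) :=
  tendsto_exp_smul_atTop_nhds_zero_of_tendsto_pow
    (tendsto_pow_atTop_nhds_zero_of_spectralRadius_lt_one (spectralRadius_exp_lt_one hM))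

theorem map_algebraMap_exp (A : Matrix n n ℝ) :
    (exp A).map (algebraMap ℝ ℂ) = exp (A.map (algebraMap ℝ ℂ)) :=
  map_exp (algebraMap ℝ ℂ).mapMatrix (continuous_id.matrix_map (continuous_algebraMap ℝ ℂ)) A

theorem tendsto_exp_smul_atTop_nhds_zero_of_spectrum_map_re_neg {A : Matrix n n ℝ}
    (hA : ∀ μ ∈ spectrum ℂ (A.map (algebraMap ℝ ℂ)), μ.re < 0) :
    Tendsto (fun t : ℝ => exp (t • A)) atTop (𝓝 0) := by
  have hre : ∀ t : ℝ, exp (t • A) = (exp (t • A.map (algebraMap ℝ ℂ))).map Complex.re := by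
    intro t
    have hsmul : t • A.map (algebraMap ℝ ℂ) = (t • A).map (algebraMap ℝ ℂ) := by
      ext
      simp [Complex.real_smul]
    rw [hsmul, ← map_algebraMap_exp]
    ext
    simp
  have hcont : Continuous fun N : Matrix n n ℂ => N.map Complex.re :=
    continuous_id.matrix_map Complex.continuous_re
  simpa [hre, Function.comp_def] using
    (hcont.tendsto 0).comp (tendsto_exp_smul_atTop_nhds_zero_of_spectrum_re_neg hA)

theorem hasDerivAt_exp_smul_mul_mul_transpose (A Δ : Matrix n n ℝ) (t : ℝ) :
    HasDerivAt (fun s : ℝ => exp (s • A) * Δ * (exp (s • A))ᵀ)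
      (exp (t • A) * (A * Δ + Δ * Aᵀ) * (exp (t • A))ᵀ) t := by
  have hP : HasDerivAt (fun s : ℝ => exp (s • A)) (exp (t • A) * A) t :=
    hasDerivAt_exp_smul_const A t
  have hPt : HasDerivAt (fun s : ℝ => (exp (s • A))ᵀ) (Aᵀ * (exp (t • A))ᵀ) t := by
    have h : (fun s : ℝ => (exp (s • A))ᵀ) = fun s => exp (s • Aᵀ) :=
      funext fun s => by rw [← transpose_smul]; exact (exp_transpose _).symm
    rw [h, congrFun h t]
    exact hasDerivAt_exp_smul_const' Aᵀ t
  refine ((hP.mul_const Δ).mul hPt).congr_deriv ?_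
  simp only [mul_add, add_mul, mul_assoc]

theorem dotProduct_mulVec_nonneg_of_lyapunov_nonpos {A Δ : Matrix n n ℝ}
    (hA : Tendsto (fun t : ℝ => exp (t • A)) atTop (𝓝 0))
    (hΔ : ∀ v, v ⬝ᵥ ((A * Δ + Δ * Aᵀ) *ᵥ v) ≤ 0) (v : n → ℝ) : 0 ≤ v ⬝ᵥ (Δ *ᵥ v) := by
  let q : Matrix n n ℝ →L[ℝ] ℝ := LinearMap.toContinuousLinearMap
    { toFun := fun N => v ⬝ᵥ (N *ᵥ v)
      map_add' := fun N₁ N₂ => by simp [add_mulVec, dotProduct_add]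
      map_smul' := fun c N => by simp [smul_mulVec, dotProduct_smul] }
  set g : ℝ → ℝ := fun t => q (exp (t • A) * Δ * (exp (t • A))ᵀ)
  have hg_anti : Antitone g := by
    refine antitone_of_hasDerivAt_nonpos
      (fun t => q.hasFDerivAt.comp_hasDerivAt t (hasDerivAt_exp_smul_mul_mul_transpose A Δ t))
      fun t => ?_
    change v ⬝ᵥ ((exp (t • A) * (A * Δ + Δ * Aᵀ) * (exp (t • A))ᵀ) *ᵥ v) ≤ 0
    rw [dotProduct_mul_mul_transpose_mulVec]
    exact hΔ _
  have hg_lim : Tendsto g atTop (𝓝 0) := by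
    have hcont : Continuous fun P : Matrix n n ℝ => q (P * Δ * Pᵀ) := by fun_prop
    have h0 : q (0 * Δ * 0ᵀ) = 0 := by simp
    exact h0 ▸ (hcont.tendsto 0).comp hA
  have hg_zero : g 0 = v ⬝ᵥ (Δ *ᵥ v) := by simp [g, q]
  rw [← hg_zero]
  exact le_of_tendsto hg_lim (eventually_ge_atTop 0 |>.mono fun t ht => hg_anti ht)

end Exponential

end Matrix

theorem lyapunov_solution_minimizes_trace_general (d p : ℕ)
    (A : Matrix (Fin d) (Fin d) ℝ)
    (hA : ∀ μ ∈ spectrum ℂ (A.map (algebraMap ℝ ℂ)), μ.re < 0)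
    (E : Matrix (Fin d) (Fin p) ℝ)
    (X₀ : Matrix (Fin d) (Fin d) ℝ)
    (hX₀ : A * X₀ + X₀ * Aᵀ + E * Eᵀ = 0) :
    ∀ X : Matrix (Fin d) (Fin d) ℝ, X.IsSymm →
      (∀ v : Fin d → ℝ, v ⬝ᵥ ((A * X + X * Aᵀ + E * Eᵀ) *ᵥ v) ≤ 0) →
      (∀ v : Fin d → ℝ, 0 ≤ v ⬝ᵥ ((X - X₀) *ᵥ v)) ∧ X₀.trace ≤ X.trace := by
  intro X _ hX
  have hlyap : A * (X - X₀) + (X - X₀) * Aᵀ = A * X + X * Aᵀ + E * Eᵀ := by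
    rw [← sub_zero (A * X + X * Aᵀ + E * Eᵀ), ← hX₀]
    noncomm_ring
  have hpos : ∀ v, 0 ≤ v ⬝ᵥ ((X - X₀) *ᵥ v) :=
    dotProduct_mulVec_nonneg_of_lyapunov_nonpos
      (tendsto_exp_smul_atTop_nhds_zero_of_spectrum_map_re_neg hA) (hlyap ▸ hX)
  refine ⟨hpos, ?_⟩
  have htrace := trace_nonneg_of_forall_dotProduct_mulVec_nonneg hpos
  rw [trace_sub] at htrace
  linarith

/-- **Lemma A.16 of Polyak.** If `A` is Hurwitz and `X₀` is a symmetric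
solution of `A X₀ + X₀ Aᵀ + E Eᵀ = 0`, then every symmetric `X` with
`A X + X Aᵀ + E Eᵀ` negative semidefinite satisfies `X - X₀ ⪰ 0`, and hence
`tr X₀ ≤ tr X`: the Lyapunov-equation solution minimizes the trace. -/
theorem lyapunov_solution_minimizes_trace (d p : ℕ)
    (A : Matrix (Fin d) (Fin d) ℝ)
    (hA : ∀ μ ∈ spectrum ℂ (A.map (algebraMap ℝ ℂ)), μ.re < 0)
    (E : Matrix (Fin d) (Fin p) ℝ)
    (X₀ : Matrix (Fin d) (Fin d) ℝ) (hX₀symm : X₀.IsSymm)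
    (hX₀ : A * X₀ + X₀ * Aᵀ + E * Eᵀ = 0) :
    ∀ X : Matrix (Fin d) (Fin d) ℝ, X.IsSymm →
      (∀ v : Fin d → ℝ, v ⬝ᵥ ((A * X + X * Aᵀ + E * Eᵀ) *ᵥ v) ≤ 0) →
      (∀ v : Fin d → ℝ, 0 ≤ v ⬝ᵥ ((X - X₀) *ᵥ v)) ∧ X₀.trace ≤ X.trace :=
  lyapunov_solution_minimizes_trace_general d p A hA E X₀ hX₀
end
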